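/- arXiv:1212.5660 — 6 statements merged into one kernel-verified Lean document; each statement's English description precedes it below -/
import Mathlib

section
/- In every BL-algebra L, the pseudo-addition ⊘ is associative and satisfies the exchange law: for all x, y, z ∈ L, (x ⊘ y) ⊘ z = x ⊘ (y ⊘ z) and x ⊘ (y ⊘ z) = y ⊘ (x ⊘ z). -/
/-- A BL-algebra: a bounded lattice with a commutative monoid operation `mul`
(written ⊗, with unit `⊤` playing the role of 1 and `⊥` the role of 0),
a residuum `imp` (written →), satisfying residuation, divisibility and
prelinearity. -/
class BLAlgebra (L : Type*) extends Lattice L, BoundedOrder L where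
  mul : L → L → L
  imp : L → L → L
  mul_comm : ∀ x y : L, mul x y = mul y x
  mul_assoc : ∀ x y z : L, mul (mul x y) z = mul x (mul y z)
  mul_top : ∀ x : L, mul x ⊤ = x
  residuation : ∀ x y z : L, mul x y ≤ z ↔ x ≤ imp y z
  divisibility : ∀ x y : L, x ⊓ y = mul x (imp x y)
  prelinearity : ∀ x y : L, imp x y ⊔ imp y x = ⊤

namespace BLAlgebra

variable {L : Type*} [BLAlgebra L]

/-- Negation: x̄ := x → 0. -/
def neg (x : L) : L := imp x ⊥

/-- Pseudo-addition: x ⊘ y := x̄ → y. -/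
def oslash (x y : L) : L := imp (neg x) y

/-- Addition: x + y := (x ⊘ y) ∧ (y ⊘ x). -/
def add (x y : L) : L := oslash x y ⊓ oslash y x

end BLAlgebra

open BLAlgebra

namespace BLAux

local infixl:70 " ⊗ " => BLAlgebra.mul
local infixr:60 " ⇨ " => BLAlgebra.imp

variable {L : Type*} [BLAlgebra L]

lemma resid {x y z : L} : x ⊗ y ≤ z ↔ x ≤ y ⇨ z := BLAlgebra.residuation x y z

lemma neg_def (x : L) : neg x = x ⇨ (⊥ : L) := rfl

lemma oslash_def (x y : L) : oslash x y = neg x ⇨ y := rfl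

lemma imp_mul_le (x y : L) : (x ⇨ y) ⊗ x ≤ y := resid.mpr le_rfl

lemma mul_mono_left {x y : L} (h : x ≤ y) (z : L) : x ⊗ z ≤ y ⊗ z :=
  resid.mpr (h.trans (resid.mp le_rfl))

lemma mul_mono_right {x y : L} (h : x ≤ y) (z : L) : z ⊗ x ≤ z ⊗ y := by
  rw [BLAlgebra.mul_comm z x, BLAlgebra.mul_comm z y]; exact mul_mono_left h z

lemma mul_le_left (x y : L) : x ⊗ y ≤ x :=
  (mul_mono_right le_top x).trans_eq (BLAlgebra.mul_top x)

lemma mul_sup (x y z : L) : x ⊗ (y ⊔ z) = (x ⊗ y) ⊔ (x ⊗ z) := by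
  apply le_antisymm
  · have hy : y ≤ x ⇨ ((x ⊗ y) ⊔ (x ⊗ z)) :=
      resid.mp (by rw [BLAlgebra.mul_comm y x]; exact le_sup_left)
    have hz : z ≤ x ⇨ ((x ⊗ y) ⊔ (x ⊗ z)) :=
      resid.mp (by rw [BLAlgebra.mul_comm z x]; exact le_sup_right)
    rw [BLAlgebra.mul_comm]
    exact resid.mpr (sup_le hy hz)
  · exact sup_le (mul_mono_right le_sup_left x) (mul_mono_right le_sup_right x)

lemma mul_neg_le (x : L) : x ⊗ neg x ≤ ⊥ := by
  rw [BLAlgebra.mul_comm, neg_def]; exact imp_mul_le x ⊥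

lemma le_negneg (x : L) : x ≤ neg (neg x) := by
  rw [neg_def (neg x)]; exact resid.mp (mul_neg_le x)

lemma neg_anti {x y : L} (h : x ≤ y) : neg y ≤ neg x := by
  rw [neg_def x]
  refine resid.mp ((mul_mono_right h (neg y)).trans ?_)
  rw [BLAlgebra.mul_comm]
  exact mul_neg_le y

lemma neg3 (x : L) : neg (neg (neg x)) = neg x :=
  le_antisymm (neg_anti (le_negneg x)) (le_negneg (neg x))

lemma curry (a b c : L) : (a ⊗ b) ⇨ c = a ⇨ (b ⇨ c) := by
  apply le_antisymm
  · refine resid.mp (resid.mp ?_)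
    rw [BLAlgebra.mul_assoc]
    exact imp_mul_le (a ⊗ b) c
  · refine resid.mp ?_
    rw [← BLAlgebra.mul_assoc]
    exact (mul_mono_left (imp_mul_le a (b ⇨ c)) b).trans (imp_mul_le b c)

lemma neg_imp (a b : L) (h : neg (neg a) = a) : neg (a ⇨ b) = a ⊗ neg b := by
  have hc : neg (a ⇨ b) ⊗ (a ⇨ b) ≤ ⊥ := by rw [neg_def]; exact imp_mul_le _ ⊥
  have hceq : neg (a ⇨ b) ⊗ (a ⇨ b) = ⊥ := le_antisymm hc bot_le
  have hna : neg a ≤ a ⇨ b := by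
    refine resid.mp ?_
    calc neg a ⊗ a ≤ (⊥ : L) := by rw [neg_def]; exact imp_mul_le a ⊥
    _ ≤ b := bot_le
  have hca : neg (a ⇨ b) ≤ a := by have := neg_anti hna; rwa [h] at this
  apply le_antisymm
  · have h1 : neg (a ⇨ b) = neg (a ⇨ b) ⊗ (b ⇨ a) := by
      conv_lhs => rw [← BLAlgebra.mul_top (neg (a ⇨ b)), ← BLAlgebra.prelinearity a b]
      rw [mul_sup, hceq, bot_sup_eq]
    have h2 : neg (a ⇨ b) = a ⊗ (a ⇨ neg (a ⇨ b)) := by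
      rw [← BLAlgebra.divisibility, inf_eq_right.mpr hca]
    have h3 : ((a ⇨ neg (a ⇨ b)) ⊗ (b ⇨ a)) ⊗ b ≤ ⊥ := by
      have e1 : (b ⇨ a) ⊗ b = a ⊗ (a ⇨ b) := by
        rw [BLAlgebra.mul_comm, ← BLAlgebra.divisibility, inf_comm, BLAlgebra.divisibility]
      calc ((a ⇨ neg (a ⇨ b)) ⊗ (b ⇨ a)) ⊗ b
          = (a ⇨ neg (a ⇨ b)) ⊗ ((b ⇨ a) ⊗ b) := BLAlgebra.mul_assoc ..
        _ = ((a ⇨ neg (a ⇨ b)) ⊗ a) ⊗ (a ⇨ b) := by rw [e1, ← BLAlgebra.mul_assoc]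
        _ ≤ neg (a ⇨ b) ⊗ (a ⇨ b) := mul_mono_left (imp_mul_le ..) _
        _ ≤ ⊥ := hc
    have h4 : (a ⇨ neg (a ⇨ b)) ⊗ (b ⇨ a) ≤ neg b := by
      rw [neg_def]; exact resid.mp h3
    calc neg (a ⇨ b) = neg (a ⇨ b) ⊗ (b ⇨ a) := h1
      _ = (a ⊗ (a ⇨ neg (a ⇨ b))) ⊗ (b ⇨ a) := by rw [← h2]
      _ = a ⊗ ((a ⇨ neg (a ⇨ b)) ⊗ (b ⇨ a)) := BLAlgebra.mul_assoc ..
      _ ≤ a ⊗ neg b := mul_mono_right h4 a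
  · rw [neg_def]
    refine resid.mp ?_
    calc (a ⊗ neg b) ⊗ (a ⇨ b)
        = (a ⊗ (a ⇨ b)) ⊗ neg b := by
          rw [BLAlgebra.mul_assoc, BLAlgebra.mul_comm (neg b), ← BLAlgebra.mul_assoc]
      _ ≤ b ⊗ neg b := mul_mono_left (by rw [← BLAlgebra.divisibility]; exact inf_le_right) _
      _ ≤ ⊥ := mul_neg_le b

end BLAux

open BLAux in
/-- In every BL-algebra, the pseudo-addition ⊘ is associative and
satisfies the exchange law. -/
theorem oslash_assoc_and_exchange {L : Type*} [BLAlgebra L] (x y z : L) :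
    oslash (oslash x y) z = oslash x (oslash y z) ∧
    oslash x (oslash y z) = oslash y (oslash x z) := by
  constructor
  · simp only [oslash_def]
    rw [neg_imp (neg x) y (neg3 x), curry]
  · simp only [oslash_def]
    rw [← curry, ← curry, BLAlgebra.mul_comm]
end

section
/- In every BL-algebra L, the addition + is associative: for all x, y, z ∈ L, (x + y) + z = x + (y + z). -/
open BLAlgebra

namespace BLAux

variable {L : Type*} [BLAlgebra L]

local infixl:70 " ⊗ " => BLAlgebra.mul
local infixr:60 " ⇨ " => BLAlgebra.imp

lemma bl_mul_imp_le (a b : L) : (a ⇨ b) ⊗ a ≤ b :=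
  (residuation _ _ _).2 le_rfl

lemma bl_mul_le_mul_left {a b : L} (c : L) (h : a ≤ b) : a ⊗ c ≤ b ⊗ c :=
  (residuation _ _ _).2 (h.trans ((residuation _ _ _).1 le_rfl))

lemma bl_mul_le_mul_right {a b : L} (c : L) (h : a ≤ b) : c ⊗ a ≤ c ⊗ b := by
  rw [BLAlgebra.mul_comm c a, BLAlgebra.mul_comm c b]; exact bl_mul_le_mul_left c h

lemma bl_imp_mono {a b : L} (c : L) (h : a ≤ b) : (c ⇨ a) ≤ (c ⇨ b) :=
  (residuation _ _ _).1 ((bl_mul_imp_le c a).trans h)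

lemma bl_imp_anti {a b : L} (c : L) (h : a ≤ b) : (b ⇨ c) ≤ (a ⇨ c) :=
  (residuation _ _ _).1 ((bl_mul_le_mul_right _ h).trans (bl_mul_imp_le b c))

lemma bl_le_of_top_le_imp {a b : L} (h : (⊤ : L) ≤ a ⇨ b) : a ≤ b := by
  have := (residuation (⊤ : L) a b).2 h
  rwa [BLAlgebra.mul_comm, BLAlgebra.mul_top] at this

lemma bl_curry (a b c : L) : (a ⊗ b) ⇨ c = b ⇨ a ⇨ c := by
  apply le_antisymm
  · refine (residuation _ _ _).1 ((residuation _ _ _).1 ?_)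
    rw [BLAlgebra.mul_assoc, BLAlgebra.mul_comm b a]
    exact bl_mul_imp_le _ _
  · refine (residuation _ _ _).1 ?_
    rw [BLAlgebra.mul_comm a b, ← BLAlgebra.mul_assoc]
    exact (bl_mul_le_mul_left a (bl_mul_imp_le b (a ⇨ c))).trans (bl_mul_imp_le a c)

lemma bl_imp_inf (a b c : L) : a ⇨ (b ⊓ c) = (a ⇨ b) ⊓ (a ⇨ c) := by
  apply le_antisymm
  · exact le_inf (bl_imp_mono a inf_le_left) (bl_imp_mono a inf_le_right)
  · refine (residuation _ _ _).1 (le_inf ?_ ?_)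
    · exact (bl_mul_le_mul_left a inf_le_left).trans (bl_mul_imp_le a b)
    · exact (bl_mul_le_mul_left a inf_le_right).trans (bl_mul_imp_le a c)

lemma bl_mul_sup (a b c : L) : a ⊗ (b ⊔ c) = (a ⊗ b) ⊔ (a ⊗ c) := by
  apply le_antisymm
  · rw [BLAlgebra.mul_comm]
    refine (residuation _ _ _).2 (sup_le ?_ ?_)
    · exact (residuation _ _ _).1 (by rw [BLAlgebra.mul_comm]; exact le_sup_left)
    · exact (residuation _ _ _).1 (by rw [BLAlgebra.mul_comm]; exact le_sup_right)
  · exact sup_le (bl_mul_le_mul_right a le_sup_left) (bl_mul_le_mul_right a le_sup_right)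

lemma bl_mul_neg (a : L) : a ⊗ neg a = ⊥ := by
  have := divisibility a (⊥ : L)
  rw [inf_bot_eq] at this
  exact this.symm

lemma bl_le_negneg (a : L) : a ≤ neg (neg a) :=
  (residuation _ _ _).1 ((bl_mul_neg a).le.trans bot_le)

lemma bl_neg_anti {a b : L} (h : a ≤ b) : neg b ≤ neg a := bl_imp_anti ⊥ h

lemma bl_neg_negneg (a : L) : neg (neg (neg a)) = neg a :=
  le_antisymm (bl_neg_anti (bl_le_negneg a)) (bl_le_negneg (neg a))

lemma bl_inf_imp (a b c : L) : (a ⊓ b) ⇨ c = (a ⇨ c) ⊔ (b ⇨ c) := by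
  apply le_antisymm
  · have key : ∀ u v : L, (u ⇨ v) ≤ ((u ⊓ v) ⇨ c) ⇨ (u ⇨ c) := by
      intro u v
      refine (residuation _ _ _).1 ((residuation _ _ _).1 ?_)
      rw [BLAlgebra.mul_assoc, BLAlgebra.mul_comm ((u ⊓ v) ⇨ c) u, ← BLAlgebra.mul_assoc,
        BLAlgebra.mul_comm (u ⇨ v) u, ← divisibility, BLAlgebra.mul_comm (u ⊓ v)]
      exact bl_mul_imp_le _ _
    have h1 : (a ⇨ b) ≤ ((a ⊓ b) ⇨ c) ⇨ ((a ⇨ c) ⊔ (b ⇨ c)) :=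
      (key a b).trans (bl_imp_mono _ le_sup_left)
    have h2 : (b ⇨ a) ≤ ((a ⊓ b) ⇨ c) ⇨ ((a ⇨ c) ⊔ (b ⇨ c)) := by
      have := (key b a).trans
        (bl_imp_mono ((b ⊓ a) ⇨ c) (le_sup_right : (b ⇨ c) ≤ (a ⇨ c) ⊔ (b ⇨ c)))
      rwa [inf_comm b a] at this
    exact bl_le_of_top_le_imp ((prelinearity a b) ▸ sup_le h1 h2)
  · exact sup_le (bl_imp_anti c inf_le_left) (bl_imp_anti c inf_le_right)

lemma bl_neg_inf (a b : L) : neg (a ⊓ b) = neg a ⊔ neg b := bl_inf_imp a b ⊥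

lemma bl_neg_oslash (x y : L) : neg (oslash x y) = neg x ⊗ neg y := by
  set a := neg x with ha
  have h0 : neg a ≤ a ⇨ y := (residuation _ _ _).1 (by
    rw [BLAlgebra.mul_comm, bl_mul_neg]; exact bot_le)
  have h1 : neg (a ⇨ y) ≤ a := (bl_neg_anti h0).trans (bl_neg_negneg x).le
  have h2 : neg (a ⇨ y) = a ⊗ (a ⇨ neg (a ⇨ y)) := by
    rw [← divisibility, inf_eq_right.2 h1]
  have h3 : a ⇨ neg (a ⇨ y) = neg a ⊔ neg y := by
    show a ⇨ (a ⇨ y) ⇨ ⊥ = _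
    rw [← bl_curry, BLAlgebra.mul_comm (a ⇨ y) a, ← divisibility]
    exact bl_neg_inf a y
  show neg (a ⇨ y) = _
  rw [h2, h3, bl_mul_sup, bl_mul_neg, bot_sup_eq]

lemma bl_neg_add (x y : L) : neg (add x y) = neg x ⊗ neg y := by
  unfold BLAlgebra.add
  rw [bl_neg_inf, bl_neg_oslash, bl_neg_oslash, BLAlgebra.mul_comm (neg y), sup_idem]

end BLAux

open BLAux

/-- The addition + is associative in every BL-algebra. -/
theorem add_assoc' {L : Type*} [BLAlgebra L] (x y z : L) :
    add (add x y) z = add x (add y z) := by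
  have expand : ∀ a b c : L,
      add (add a b) c =
        imp (mul (neg a) (neg b)) c ⊓
          (imp (mul (neg a) (neg c)) b ⊓ imp (mul (neg b) (neg c)) a) := by
    intro a b c
    show oslash (add a b) c ⊓ oslash c (add a b) = _
    unfold BLAlgebra.oslash
    rw [bl_neg_add]
    congr 1
    show imp (neg c) (add a b) = _
    unfold BLAlgebra.add BLAlgebra.oslash
    rw [bl_imp_inf, ← bl_curry, ← bl_curry, BLAlgebra.mul_comm (neg a) (neg c),
      BLAlgebra.mul_comm (neg b) (neg c)]
  have expand2 : add x (add y z) =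
      imp (mul (neg x) (neg y)) z ⊓
        (imp (mul (neg x) (neg z)) y ⊓ imp (mul (neg y) (neg z)) x) := by
    have hc : add x (add y z) = add (add y z) x := by
      unfold BLAlgebra.add; rw [inf_comm]
    rw [hc, expand y z x, BLAlgebra.mul_comm (neg y) (neg x), BLAlgebra.mul_comm (neg z) (neg x)]
    rw [inf_comm, inf_assoc]
  rw [expand x y z, expand2]
end

section
/- In every BL-algebra L: for every x ∈ L, the double negation of x + x̄ equals 1 (i.e. ¬¬(x + x̄) = 1); and for all x, y ∈ L, if x + y = 1 then x̄ ≤ y. -/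
open BLAlgebra

/-! Since x̄ → x̄ = 1, the sum x + x̄ collapses to a := x̄̄ → x. From x̄ ≤ a we get ā ≤ x̄̄, and
currying gives x̄̄ → ā = (x̄̄ ⊗ a)‾ = (x̄̄ ∧ x)‾ = x̄, so divisibility yields ā = x̄̄ ∧ ā = x̄̄ ⊗ x̄ = 0.
For the second claim, x + y ≤ x ⊘ y = x̄ → y, which equals 1 exactly when x̄ ≤ y. -/

namespace BLAlgebra

variable {L : Type*} [BLAlgebra L] {x y : L}

theorem top_mul (x : L) : mul ⊤ x = x := by
  rw [BLAlgebra.mul_comm, mul_top]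

theorem mul_le_mul_left_of_le (z : L) (h : x ≤ y) : mul x z ≤ mul y z :=
  (residuation x z _).mpr (h.trans ((residuation y z _).mp le_rfl))

theorem mul_le_mul_right_of_le (z : L) (h : x ≤ y) : mul z x ≤ mul z y := by
  rw [BLAlgebra.mul_comm z x, BLAlgebra.mul_comm z y]
  exact mul_le_mul_left_of_le z h

theorem imp_eq_top_iff : imp x y = ⊤ ↔ x ≤ y := by
  rw [← top_le_iff, ← residuation, top_mul]

theorem imp_self (x : L) : imp x x = ⊤ :=
  imp_eq_top_iff.mpr le_rfl

theorem imp_imp_eq_imp_mul (x y z : L) : imp x (imp y z) = imp (mul x y) z :=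
  eq_of_forall_le_iff fun w => by
    rw [← residuation, ← residuation, ← residuation, BLAlgebra.mul_assoc]

theorem imp_neg_eq_neg_mul (x y : L) : imp x (neg y) = neg (mul x y) :=
  imp_imp_eq_imp_mul x y ⊥

theorem mul_imp_eq_of_le (h : y ≤ x) : mul x (imp x y) = y := by
  rw [← divisibility, inf_eq_right.mpr h]

theorem mul_neg_self (x : L) : mul x (neg x) = ⊥ := by
  rw [neg, ← divisibility, inf_bot_eq]

theorem neg_mul_self (x : L) : mul (neg x) x = ⊥ := by
  rw [BLAlgebra.mul_comm, mul_neg_self]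

theorem le_neg_neg (x : L) : x ≤ neg (neg x) :=
  (residuation x (neg x) ⊥).mp (mul_neg_self x).le

theorem neg_le_neg_of_le (h : x ≤ y) : neg y ≤ neg x :=
  (residuation _ x ⊥).mp ((mul_le_mul_right_of_le _ h).trans (neg_mul_self y).le)

theorem neg_bot : neg (⊥ : L) = ⊤ :=
  imp_self ⊥

theorem add_neg_eq_imp (x : L) : add x (neg x) = imp (neg (neg x)) x := by
  rw [add, oslash, oslash, imp_self, top_inf_eq]

theorem neg_imp_neg_neg_eq_bot (x : L) : neg (imp (neg (neg x)) x) = ⊥ := by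
  set a := imp (neg (neg x)) x
  have hxa : neg x ≤ a := (residuation _ _ x).mp ((mul_neg_self (neg x)).trans_le bot_le)
  have hnnx_imp : imp (neg (neg x)) (neg a) = neg x := by
    rw [imp_neg_eq_neg_mul, mul_imp_eq_of_le (le_neg_neg x)]
  calc neg a = neg (neg x) ⊓ neg a := (inf_eq_right.mpr (neg_le_neg_of_le hxa)).symm
    _ = mul (neg (neg x)) (neg x) := by rw [divisibility, hnnx_imp]
    _ = ⊥ := neg_mul_self (neg x)

theorem neg_le_of_add_eq_top (h : add x y = ⊤) : neg x ≤ y :=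
  imp_eq_top_iff.mp (top_le_iff.mp (h ▸ inf_le_left))

end BLAlgebra

/-- In every BL-algebra, ¬¬(x + x̄) = 1; and x + y = 1 implies x̄ ≤ y. -/
theorem add_neg_properties {L : Type*} [BLAlgebra L] :
    (∀ x : L, neg (neg (add x (neg x))) = ⊤) ∧
    (∀ x y : L, add x y = ⊤ → neg x ≤ y) :=
  ⟨fun x => by rw [add_neg_eq_imp, neg_imp_neg_neg_eq_bot, neg_bot],
    fun _ _ => neg_le_of_add_eq_top⟩
end

section
/- In every BL-algebra L, double negation commutes with addition: for all x, y ∈ L, ¬¬(x + y) = ¬¬x + ¬¬y, where ¬¬x denotes the double negation of x. -/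
open BLAlgebra

section Aux

variable {L : Type*} [BLAlgebra L]

lemma bl_mp (x y : L) : mul (imp x y) x ≤ y := (residuation _ _ _).mpr le_rfl

lemma bl_le_imp {x y z : L} (h : mul x y ≤ z) : x ≤ imp y z := (residuation _ _ _).mp h

lemma bl_of_le_imp {x y z : L} (h : x ≤ imp y z) : mul x y ≤ z := (residuation _ _ _).mpr h

lemma bl_mul_mono_left {a b : L} (h : a ≤ b) (c : L) : mul a c ≤ mul b c :=
  bl_of_le_imp (h.trans (bl_le_imp le_rfl))

lemma bl_mul_mono_right (c : L) {a b : L} (h : a ≤ b) : mul c a ≤ mul c b := by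
  rw [BLAlgebra.mul_comm c a, BLAlgebra.mul_comm c b]; exact bl_mul_mono_left h c

lemma bl_imp_anti {a b : L} (h : a ≤ b) (c : L) : imp b c ≤ imp a c :=
  bl_le_imp ((bl_mul_mono_right _ h).trans (bl_mp b c))

lemma bl_comp (x y z : L) : mul (imp x y) (imp y z) ≤ imp x z := by
  apply bl_le_imp
  rw [BLAlgebra.mul_comm (imp x y) (imp y z), BLAlgebra.mul_assoc]
  exact (bl_mul_mono_right _ (bl_mp x y)).trans (bl_mp y z)

lemma bl_curry (x y z : L) : imp (mul x y) z = imp x (imp y z) := by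
  apply le_antisymm
  · apply bl_le_imp; apply bl_le_imp
    rw [BLAlgebra.mul_assoc]; exact bl_mp _ _
  · apply bl_le_imp
    rw [← BLAlgebra.mul_assoc]
    exact (bl_mul_mono_left (bl_mp x (imp y z)) y).trans (bl_mp y z)

lemma bl_neg_mul (x : L) : mul (neg x) x ≤ ⊥ := bl_mp x ⊥

lemma bl_le_negneg (x : L) : x ≤ neg (neg x) :=
  bl_le_imp (by rw [BLAlgebra.mul_comm]; exact bl_neg_mul x)

lemma bl_neg_anti {a b : L} (h : a ≤ b) : neg b ≤ neg a := bl_imp_anti h ⊥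

lemma bl_negneg_neg (x : L) : neg (neg (neg x)) = neg x :=
  le_antisymm (bl_neg_anti (bl_le_negneg x)) (bl_le_negneg (neg x))

/-- Key Glivenko-type fact: ¬(¬¬y → y) = ⊥. -/
lemma bl_neg_dn_imp (y : L) : neg (imp (neg (neg y)) y) = ⊥ := by
  have hdY : neg y ≤ imp (neg (neg y)) y := by
    apply bl_le_imp
    exact le_trans (by rw [BLAlgebra.mul_comm]; exact bl_neg_mul (neg y)) bot_le
  have hg_le : neg (imp (neg (neg y)) y) ≤ neg (neg y) := bl_neg_anti hdY
  have hYy : neg (neg y) ⊓ y = y := inf_eq_right.mpr (bl_le_negneg y)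
  have himp : imp (neg (neg y)) (neg (imp (neg (neg y)) y)) = neg y := by
    show imp (neg (neg y)) (imp (imp (neg (neg y)) y) ⊥) = imp y ⊥
    rw [← bl_curry, ← BLAlgebra.divisibility, hYy]
  have hg : neg (imp (neg (neg y)) y) = mul (neg (neg y)) (neg y) := by
    conv_lhs => rw [← inf_eq_right.mpr hg_le, BLAlgebra.divisibility, himp]
  rw [hg]
  exact le_antisymm (bl_mp (neg y) ⊥) bot_le

/-- ¬¬(x → y) = x → ¬¬y. -/
lemma bl_negneg_imp (x y : L) : neg (neg (imp x y)) = imp x (neg (neg y)) := by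
  apply le_antisymm
  · have h1 : mul x (neg y) ≤ neg (imp x y) := by
      apply bl_le_imp
      rw [BLAlgebra.mul_comm x (neg y), BLAlgebra.mul_assoc]
      have h2 : mul x (imp x y) ≤ y := (BLAlgebra.divisibility x y).symm.le.trans inf_le_right
      exact (bl_mul_mono_right _ h2).trans (bl_neg_mul y)
    have h3 := bl_imp_anti h1 ⊥
    rwa [bl_curry] at h3
  · apply bl_le_imp
    have hmd : mul (imp x (neg (neg y))) (imp (neg (neg y)) y) ≤ imp x y :=
      bl_comp x (neg (neg y)) y
    have key : mul (mul (imp x (neg (neg y))) (neg (imp x y))) (imp (neg (neg y)) y) ≤ ⊥ := by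
      rw [BLAlgebra.mul_assoc, BLAlgebra.mul_comm (neg (imp x y)), ← BLAlgebra.mul_assoc]
      exact (bl_mul_mono_left hmd _).trans
        (by rw [BLAlgebra.mul_comm]; exact bl_neg_mul (imp x y))
    have := bl_le_imp key
    rw [show imp (imp (neg (neg y)) y) ⊥ = (⊥ : L) from bl_neg_dn_imp y, le_bot_iff] at this
    exact this.le

lemma bl_mul_sup (x y z : L) : mul x (y ⊔ z) = mul x y ⊔ mul x z := by
  apply le_antisymm
  · rw [BLAlgebra.mul_comm x (y ⊔ z)]
    apply bl_of_le_imp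
    apply sup_le
    · exact bl_le_imp (by rw [BLAlgebra.mul_comm]; exact le_sup_left)
    · exact bl_le_imp (by rw [BLAlgebra.mul_comm]; exact le_sup_right)
  · exact sup_le (bl_mul_mono_right x le_sup_left) (bl_mul_mono_right x le_sup_right)

lemma bl_neg_inf_le (a b : L) : neg (a ⊓ b) ≤ neg a ⊔ neg b := by
  have hp : mul (neg (a ⊓ b)) (imp a b) ≤ neg a := by
    apply bl_le_imp
    rw [BLAlgebra.mul_assoc]
    have h1 : mul (imp a b) a ≤ a ⊓ b := by
      rw [BLAlgebra.mul_comm, ← BLAlgebra.divisibility]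
    exact (bl_mul_mono_right _ h1).trans (bl_neg_mul (a ⊓ b))
  have hq : mul (neg (a ⊓ b)) (imp b a) ≤ neg b := by
    apply bl_le_imp
    rw [BLAlgebra.mul_assoc]
    have h1 : mul (imp b a) b ≤ a ⊓ b := by
      rw [BLAlgebra.mul_comm, ← BLAlgebra.divisibility]
      exact (inf_comm b a).le
    exact (bl_mul_mono_right _ h1).trans (bl_neg_mul (a ⊓ b))
  calc neg (a ⊓ b) = mul (neg (a ⊓ b)) ⊤ := (BLAlgebra.mul_top _).symm
    _ = mul (neg (a ⊓ b)) (imp a b ⊔ imp b a) := by rw [BLAlgebra.prelinearity]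
    _ = mul (neg (a ⊓ b)) (imp a b) ⊔ mul (neg (a ⊓ b)) (imp b a) := bl_mul_sup _ _ _
    _ ≤ neg a ⊔ neg b := sup_le_sup hp hq

lemma bl_negneg_inf (a b : L) : neg (neg (a ⊓ b)) = neg (neg a) ⊓ neg (neg b) := by
  apply le_antisymm
  · exact le_inf (bl_neg_anti (bl_neg_anti inf_le_left)) (bl_neg_anti (bl_neg_anti inf_le_right))
  · apply bl_le_imp
    calc mul (neg (neg a) ⊓ neg (neg b)) (neg (a ⊓ b))
        ≤ mul (neg (neg a) ⊓ neg (neg b)) (neg a ⊔ neg b) :=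
          bl_mul_mono_right _ (bl_neg_inf_le a b)
      _ = mul (neg (neg a) ⊓ neg (neg b)) (neg a) ⊔ mul (neg (neg a) ⊓ neg (neg b)) (neg b) :=
          bl_mul_sup _ _ _
      _ ≤ ⊥ := sup_le
          ((bl_mul_mono_left inf_le_left _).trans (bl_mp (neg a) ⊥))
          ((bl_mul_mono_left inf_le_right _).trans (bl_mp (neg b) ⊥))

end Aux

/-- In every BL-algebra, double negation commutes with addition. -/
theorem neg_neg_add {L : Type*} [BLAlgebra L] (x y : L) :
    neg (neg (add x y)) = add (neg (neg x)) (neg (neg y)) := by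
  show neg (neg (oslash x y ⊓ oslash y x)) = _
  rw [bl_negneg_inf]
  show imp (neg (imp (neg x) y)) ⊥ ⊓ imp (neg (imp (neg y) x)) ⊥
      = imp (neg (neg (neg x))) (neg (neg y)) ⊓ imp (neg (neg (neg y))) (neg (neg x))
  rw [bl_negneg_neg, bl_negneg_neg]
  have h1 := bl_negneg_imp (neg x) y
  have h2 := bl_negneg_imp (neg y) x
  exact congrArg₂ (· ⊓ ·) h1 h2
end

section
/- Let L be a BL-chain and x, y ∈ L. If x + y < 1, then x ⊗ y = 0. -/
open BLAlgebra

/-- In a BL-chain, x + y < 1 implies x ⊗ y = 0. -/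
theorem add_lt_top_mul_eq_bot {L : Type*} [BLAlgebra L]
    (htot : ∀ x y : L, x ≤ y ∨ y ≤ x) (x y : L)
    (h : add x y < ⊤) : mul x y = ⊥ := by
  have imp_top : ∀ a b : L, a ≤ b → imp a b = ⊤ := by
    intro a b hab
    refine le_antisymm le_top ?_
    rw [← residuation]
    calc mul ⊤ a = mul a ⊤ := mul_comm ⊤ a
    _ = a := mul_top a
    _ ≤ b := hab
  have key : ¬ (neg x ≤ y) ∨ ¬ (neg y ≤ x) := by
    by_contra hc
    push_neg at hc
    have : add x y = ⊤ := by
      unfold add oslash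
      rw [imp_top _ _ hc.1, imp_top _ _ hc.2, top_inf_eq]
    exact absurd this h.ne
  refine le_antisymm ?_ bot_le
  rcases key with hk | hk
  · rcases htot (neg x) y with h1 | h1
    · exact absurd h1 hk
    · rw [BLAlgebra.mul_comm, residuation]; exact h1
  · rcases htot (neg y) x with h1 | h1
    · exact absurd h1 hk
    · rw [residuation]; exact h1
end

section
/- Let L be a BL-chain and x, y, z ∈ L. (1) If x + y = x + z and x ⊗ y = x ⊗ z, then ȳ = z̄. (2) If x + y = x + z < 1, then ȳ = z̄. -/
open BLAlgebra

namespace BLProof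

variable {L : Type*} [BLAlgebra L]

lemma mcomm (x y : L) : mul x y = mul y x := BLAlgebra.mul_comm x y
lemma massoc (x y z : L) : mul (mul x y) z = mul x (mul y z) := BLAlgebra.mul_assoc x y z
lemma mtop (x : L) : mul x ⊤ = x := BLAlgebra.mul_top x

lemma res {x y z : L} : mul x y ≤ z ↔ x ≤ imp y z := residuation x y z

lemma mp (x y : L) : mul (imp x y) x ≤ y := res.mpr le_rfl

lemma mul_mono_left {x y : L} (h : x ≤ y) (c : L) : mul x c ≤ mul y c :=
  res.mpr (h.trans (res.mp (le_refl (mul y c))))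

lemma mul_mono_right {x y : L} (h : x ≤ y) (c : L) : mul c x ≤ mul c y := by
  rw [mcomm c x, mcomm c y]; exact mul_mono_left h c

lemma imp_le_imp_left {x y : L} (h : x ≤ y) (c : L) : imp c x ≤ imp c y :=
  res.mp ((mp c x).trans h)

lemma imp_le_imp_right {x y : L} (h : x ≤ y) (c : L) : imp y c ≤ imp x c :=
  res.mp ((mul_mono_right h (imp y c)).trans (mp y c))

lemma imp_eq_top_iff {x y : L} : imp x y = ⊤ ↔ x ≤ y := by
  constructor
  · intro h
    have : mul ⊤ x ≤ y := res.mpr (le_of_eq h.symm)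
    rwa [mcomm, mtop] at this
  · intro h
    refine le_antisymm le_top (res.mp ?_)
    rw [mcomm, mtop]; exact h

lemma top_imp (x : L) : imp ⊤ x = x := by
  refine le_antisymm ?_ (res.mp (le_of_eq (mtop x)))
  have := mp ⊤ x
  rwa [mtop] at this

lemma mul_neg_self (x : L) : mul (neg x) x = ⊥ := le_bot_iff.mp (mp x ⊥)

lemma mul_self_neg (x : L) : mul x (neg x) = ⊥ := by rw [mcomm]; exact mul_neg_self x

lemma le_negneg (x : L) : x ≤ neg (neg x) :=
  res.mp (le_of_eq (mul_self_neg x))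

lemma neg_anti {x y : L} (h : x ≤ y) : neg y ≤ neg x := imp_le_imp_right h ⊥

lemma negneg_neg (x : L) : neg (neg (neg x)) = neg x :=
  le_antisymm (neg_anti (le_negneg x)) (le_negneg (neg x))

lemma imp_mul (a b c : L) : imp (mul a b) c = imp a (imp b c) := by
  apply le_antisymm
  · refine res.mp (res.mp ?_)
    rw [massoc]
    exact mp (mul a b) c
  · refine res.mp ?_
    rw [← massoc]
    exact res.mpr (mp a (imp b c))

lemma neg_mul (a b : L) : neg (mul a b) = imp a (neg b) := imp_mul a b ⊥

/-- divisibility specialized: if x ≤ a then a ⊗ (a → x) = x. -/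
lemma div_eq {x a : L} (h : x ≤ a) : mul a (imp a x) = x := by
  rw [← divisibility, inf_eq_right.mpr h]

/-- L1: in a BL-chain, every element is either dense (¬x = ⊥) or regular (¬¬x = x). -/
lemma L1 (htot : ∀ x y : L, x ≤ y ∨ y ≤ x) (x : L) :
    neg x = ⊥ ∨ neg (neg x) = x := by
  by_cases hx : neg (neg x) = x
  · exact Or.inr hx
  left
  have hxm : x ≤ neg (neg x) := le_negneg x
  have h1 : mul (neg (neg x)) (imp (neg (neg x)) x) = x := div_eq hxm
  -- abbreviations
  set m := neg (neg x) with hm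
  set n := neg x with hn
  set d := imp m x with hd
  have hnm : neg m = n := negneg_neg x
  have h2 : imp d n = n := by
    have e1 : neg (mul d m) = imp d (neg m) := neg_mul d m
    rw [mcomm d m, h1, hnm] at e1
    exact e1.symm
  have h3 : n ≤ d := by
    apply res.mp
    have hb : mul n m = ⊥ := mul_self_neg n
    rw [hb]
    exact bot_le
  have h4 : mul d n = n := by
    have := div_eq h3
    rwa [h2] at this
  have h5 : imp d m = m := by
    have e1 : neg (mul d n) = imp d (neg n) := neg_mul d n
    rw [h4] at e1
    have : neg n = m := rfl
    rw [this] at e1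
    exact e1.symm
  have h6 : d ⊓ m = x := by
    have := divisibility d m
    rw [h5, mcomm] at this
    rw [this, h1]
  have h7 : d = x := by
    rcases htot m d with hmd | hdm
    · exfalso; apply hx
      rw [← h6, inf_eq_right.mpr hmd]
    · rw [← h6, inf_eq_left.mpr hdm]
  have h8 : mul m x = x := by
    have := h1
    rwa [h7] at this
  have h9 : imp m n = n := by
    have e1 : neg (mul m x) = imp m (neg x) := neg_mul m x
    rw [h8] at e1
    exact e1.symm
  have h10 : m ⊓ n = ⊥ := by
    have hdiv := divisibility m n
    rw [h9] at hdiv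
    rw [hdiv, ← hnm]
    exact mul_self_neg m
  rcases htot m n with hmn | hnm2
  · exfalso
    have hmbot : m = ⊥ := by rw [← h10, inf_eq_left.mpr hmn]
    have hxbot : x = ⊥ := le_bot_iff.mp (hmbot ▸ hxm)
    exact hx (by rw [hmbot, hxbot])
  · rw [← h10, inf_eq_right.mpr hnm2]

/-- C: if x is regular, then ¬x→y ≤ ¬y→x. -/
lemma lemC {x y : L} (hreg : neg (neg x) = x) : imp (neg x) y ≤ imp (neg y) x := by
  apply res.mp
  have h1 : mul (mul (imp (neg x) y) (neg y)) (neg x) ≤ ⊥ := by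
    rw [massoc, mcomm (neg y) (neg x), ← massoc]
    calc mul (mul (imp (neg x) y) (neg x)) (neg y)
        ≤ mul y (neg y) := mul_mono_left (mp (neg x) y) (neg y)
      _ = ⊥ := mul_self_neg y
  have h2 : mul (imp (neg x) y) (neg y) ≤ neg (neg x) := res.mp h1
  rwa [hreg] at h2

/-- D: if x ≤ ¬y then (¬y → x) → x = ¬y. -/
lemma lemD (htot : ∀ x y : L, x ≤ y ∨ y ≤ x) {x y : L} (hxy : x ≤ neg y) :
    imp (imp (neg y) x) x = neg y := by
  set a := neg y with ha
  have hreg : neg (neg a) = a := negneg_neg y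
  set s := imp a x with hs
  set w := imp s x with hw
  have has : mul a s = x := div_eq hxy
  have haw : a ≤ w := res.mp (le_of_eq has)
  refine le_antisymm ?_ haw
  by_cases hwa : w ≤ a
  · exact hwa
  exfalso
  set e := imp w a with he
  have hwe : mul w e = a := div_eq haw
  have hxs : x ≤ s := by
    apply res.mp
    have : mul x a ≤ mul x ⊤ := mul_mono_right le_top x
    rwa [mtop] at this
  have hsw : mul s w = x := div_eq hxs
  have hxe : mul x e = x := by
    calc mul x e = mul (mul s w) e := by rw [hsw]
      _ = mul s (mul w e) := massoc s w e
      _ = mul s a := by rw [hwe]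
      _ = mul a s := mcomm s a
      _ = x := has
  have hnx : neg x = imp x (neg e) := by
    conv_lhs => rw [← hxe]
    exact neg_mul x e
  have hinf : x ⊓ neg e = ⊥ := by
    rw [divisibility, ← hnx, mul_self_neg]
  rcases htot x (neg e) with hxne | hnex
  · -- x = ⊥
    have hxbot : x = ⊥ := by rw [← hinf, inf_eq_left.mpr hxne]
    apply hwa
    rw [hw, hs, hxbot]
    have : imp (imp a ⊥) ⊥ = neg (neg a) := rfl
    rw [this, hreg]
  · -- neg e = ⊥
    have hneb : neg e = ⊥ := by rw [← hinf, inf_eq_right.mpr hnex]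
    have hna : neg a = neg w := by
      have e1 : neg (mul w e) = imp w (neg e) := neg_mul w e
      rw [hwe, hneb] at e1
      exact e1
    apply hwa
    calc w ≤ neg (neg w) := le_negneg w
      _ = neg (neg a) := by rw [hna]
      _ = a := hreg

/-- The key per-variable dichotomy. -/
lemma key (htot : ∀ x y : L, x ≤ y ∨ y ≤ x) (x y : L) (hlt : add x y < ⊤) :
    (neg (neg x) = x ∧ mul (add x y) (neg x) = y)
  ∨ (neg x ≤ y ∧ ¬ (neg y ≤ x) ∧ imp (add x y) x = neg y) := by
  have hadd : add x y = imp (neg x) y ⊓ imp (neg y) x := rfl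
  by_cases hny : neg x ≤ y
  · -- right branch
    right
    have hnyx : ¬ (neg y ≤ x) := by
      intro con
      have h1 : imp (neg x) y = ⊤ := imp_eq_top_iff.mpr hny
      have h2 : imp (neg y) x = ⊤ := imp_eq_top_iff.mpr con
      have : add x y = ⊤ := by rw [hadd, h1, h2, inf_idem]
      exact hlt.ne this
    refine ⟨hny, hnyx, ?_⟩
    have hxny : x ≤ neg y := (htot x (neg y)).resolve_right hnyx
    have hs : add x y = imp (neg y) x := by
      rw [hadd, imp_eq_top_iff.mpr hny, top_inf_eq]
    rw [hs]
    exact lemD htot hxny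
  · -- left branch
    left
    have hyx : y ≤ neg x := (htot (neg x) y).resolve_left hny
    have hnxb : neg x ≠ ⊥ := by
      intro con
      exact hny (con ▸ bot_le)
    have hreg : neg (neg x) = x := (L1 htot x).resolve_left hnxb
    refine ⟨hreg, ?_⟩
    have hs : add x y = imp (neg x) y := by
      rw [hadd, inf_eq_left.mpr (lemC hreg)]
    rw [hs, mcomm]
    exact div_eq hyx

/-- Part (2). -/
lemma main2 (htot : ∀ x y : L, x ≤ y ∨ y ≤ x) (x y z : L)
    (h : add x y = add x z) (hlt : add x y < ⊤) : neg y = neg z := by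
  have hltz : add x z < ⊤ := h ▸ hlt
  rcases key htot x y hlt with ⟨hregy, hy⟩ | ⟨hle1, hny, hy⟩ <;>
    rcases key htot x z hltz with ⟨hregz, hz⟩ | ⟨hle2, hnz, hz⟩
  · -- both left: y = z
    have : y = z := by rw [← hy, ← hz, h]
    rw [this]
  · -- left for y, right for z: contradiction
    exact absurd ((neg_anti hle2).trans (le_of_eq hregy)) hnz
  · -- right for y, left for z: contradiction
    exact absurd ((neg_anti hle1).trans (le_of_eq hregz)) hny
  · -- both right
    rw [← hy, ← hz, h]

end BLProof

/-- In a BL-chain: (1) x + y = x + z and x ⊗ y = x ⊗ z imply ȳ = z̄;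
(2) x + y = x + z < 1 implies ȳ = z̄. -/
theorem add_cancel_neg {L : Type*} [BLAlgebra L]
    (htot : ∀ x y : L, x ≤ y ∨ y ≤ x) (x y z : L) :
    (add x y = add x z → mul x y = mul x z → neg y = neg z) ∧
    (add x y = add x z → add x y < ⊤ → neg y = neg z) := by
  constructor
  · intro hadd hmul
    by_cases hs : add x y = ⊤
    · have hsz : add x z = ⊤ := hadd ▸ hs
      have h1 : neg y ≤ x := by
        have : (⊤ : L) ≤ imp (neg y) x := by
          rw [← hs]; exact inf_le_right
        exact BLProof.imp_eq_top_iff.mp (le_antisymm le_top this)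
      have h2 : neg z ≤ x := by
        have : (⊤ : L) ≤ imp (neg z) x := by
          rw [← hsz]; exact inf_le_right
        exact BLProof.imp_eq_top_iff.mp (le_antisymm le_top this)
      calc neg y = mul x (imp x (neg y)) := (BLProof.div_eq h1).symm
        _ = mul x (neg (mul x y)) := by rw [BLProof.neg_mul]
        _ = mul x (neg (mul x z)) := by rw [hmul]
        _ = mul x (imp x (neg z)) := by rw [BLProof.neg_mul]
        _ = neg z := BLProof.div_eq h2
    · exact BLProof.main2 htot x y z hadd (lt_top_iff_ne_top.mpr hs)
  · exact BLProof.main2 htot x y z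
end
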